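/- arXiv:2102.12952 — 4 statements merged into one kernel-verified Lean document; each statement's English description precedes it below -/
import Mathlib

section
/- Let S be a measurable space, let X = (X_1, X_2, …) be a stationary and ergodic S-valued sequence, realized as the coordinate process on S^ℕ with left shift T (so the law of X on S^ℕ is T-invariant and ergodic). Let g_n : S^ℕ → ℝ (n ≥ 1) and g : S^ℕ → ℝ be measurable functions such that g_n(X) → g(X) almost surely and E[sup_n |g_n(X)|] < ∞. Then (1/n) ∑_{i=0}^{n−1} g_n(T^i X) → E[g(X)] almost surely as n → ∞. -/
/-!
Once `n ≥ m`, the orbit averages of `g n` differ from those of `g₀` by at most the orbit averages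
of the tail oscillation `G m = sup_{k ≥ m} |g k - g₀|`. By Birkhoff's theorem these converge to
`∫ g₀` and `∫ G m`, and `∫ G m → 0` by dominated convergence with dominating function
`2 sup_n |g n|`.

Birkhoff's theorem is proved from Garsia's maximal ergodic inequality: for `∫ f < 0`, the set
where the Birkhoff sums of `f` are unbounded above is invariant, hence null or conull; were it
conull, the set where some Birkhoff sum is positive would be conull too, and the maximal
inequality would give `0 ≤ ∫ f`.
-/

open MeasureTheory Filter Set Topology

section Birkhoff

variable {α : Type*} {T : α → α} {f : α → ℝ}

lemma partialSups_birkhoffSum_nonneg (N : ℕ) (x : α) :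
    0 ≤ partialSups (birkhoffSum T f) N x := by
  simpa using le_partialSups_of_le (birkhoffSum T f) N.zero_le x

lemma partialSups_birkhoffSum_le_add {N : ℕ} {x : α}
    (hx : 0 < partialSups (birkhoffSum T f) N x) :
    partialSups (birkhoffSum T f) N x ≤ f x + partialSups (birkhoffSum T f) N (T x) := by
  have h : partialSups (birkhoffSum T f) N x ≤
      max 0 (f x + partialSups (birkhoffSum T f) N (T x)) := by
    rw [Pi.partialSups_apply]
    refine partialSups_le _ _ _ fun k hk => ?_
    rcases k with _ | k
    · simp
    · rw [birkhoffSum_succ']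
      exact le_max_of_le_right (add_le_add_right
        (le_partialSups_of_le (birkhoffSum T f) (by omega : k ≤ N) (T x)) _)
  exact (le_max_iff.1 h).resolve_left hx.not_ge

lemma preimage_setOf_bddAbove_birkhoffSum :
    T ⁻¹' {x | BddAbove (range fun n => birkhoffSum T f n x)} =
      {x | BddAbove (range fun n => birkhoffSum T f n x)} := by
  ext x
  simp only [mem_preimage, mem_ofPred_eq]
  constructor
  · rintro ⟨C, hC⟩
    refine ⟨max 0 (f x + C), forall_mem_range.2 fun n => ?_⟩
    rcases n with _ | n
    · simp
    · rw [birkhoffSum_succ']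
      exact le_max_of_le_right (add_le_add_right (hC (mem_range_self n)) _)
  · rintro ⟨C, hC⟩
    refine ⟨C - f x, forall_mem_range.2 fun n => ?_⟩
    have := hC (mem_range_self (n + 1))
    rw [birkhoffSum_succ'] at this
    linarith

variable [MeasurableSpace α] {μ : Measure α}

lemma Measurable.birkhoffSum (hf : Measurable f) (hT : Measurable T) (n : ℕ) :
    Measurable (birkhoffSum T f n) :=
  Finset.measurable_sum _ fun i _ => hf.comp (hT.iterate i)

lemma MeasureTheory.Integrable.birkhoffSum (hf : Integrable f μ) (hT : MeasurePreserving T μ μ)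
    (n : ℕ) :
    Integrable (birkhoffSum T f n) μ :=
  integrable_finsetSum _ fun i _ => (hT.iterate i).integrable_comp_of_integrable hf

lemma Measurable.partialSups {u : ℕ → α → ℝ} (hu : ∀ n, Measurable (u n)) (N : ℕ) :
    Measurable (partialSups u N) := by
  induction N with
  | zero => simpa using hu 0
  | succ N ih => simpa using ih.sup (hu (N + 1))

lemma MeasureTheory.Integrable.partialSups {u : ℕ → α → ℝ} (hu : ∀ n, Integrable (u n) μ)
    (N : ℕ) :
    Integrable (partialSups u N) μ := by
  induction N with
  | zero => simpa using hu 0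
  | succ N ih => simpa using ih.sup (hu (N + 1))

lemma setIntegral_partialSups_birkhoffSum_pos_nonneg (hT : MeasurePreserving T μ μ)
    (hf : Measurable f) (hfi : Integrable f μ) (N : ℕ) :
    0 ≤ ∫ x in {x | 0 < partialSups (birkhoffSum T f) N x}, f x ∂μ := by
  set M := partialSups (birkhoffSum T f) N
  set E := {x | 0 < M x}
  have hM : Measurable M := Measurable.partialSups (fun n => hf.birkhoffSum hT.measurable n) N
  have hMi : Integrable M μ := Integrable.partialSups (fun n => hfi.birkhoffSum hT n) N
  have hMTi : Integrable (M ∘ T) μ := hT.integrable_comp_of_integrable hMi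
  have hE : MeasurableSet E := measurableSet_lt measurable_const hM
  have hMT : ∫ x, M (T x) ∂μ = ∫ x, M x ∂μ := by
    rw [← hT.map_eq, integral_map hT.measurable.aemeasurable hM.aestronglyMeasurable, hT.map_eq]
  calc 0 = ∫ x, M x ∂μ - ∫ x, M (T x) ∂μ := by rw [hMT, sub_self]
    _ ≤ ∫ x in E, M x ∂μ - ∫ x in E, M (T x) ∂μ := by
      refine sub_le_sub (setIntegral_eq_integral_of_forall_compl_eq_zero fun x hx =>
        le_antisymm (not_lt.1 hx) (partialSups_birkhoffSum_nonneg N x)).ge ?_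
      exact setIntegral_le_integral hMTi
        (ae_of_all _ fun x => partialSups_birkhoffSum_nonneg N (T x))
    _ = ∫ x in E, (M x - M (T x)) ∂μ := (integral_sub hMi.integrableOn hMTi.integrableOn).symm
    _ ≤ ∫ x in E, f x ∂μ := setIntegral_mono_on (hMi.sub hMTi).integrableOn hfi.integrableOn hE
      fun x hx => by linarith [partialSups_birkhoffSum_le_add (f := f) (T := T) hx]

theorem maximal_ergodic_theorem (hT : MeasurePreserving T μ μ) (hf : Measurable f)
    (hfi : Integrable f μ) : 0 ≤ ∫ x in {x | ∃ n, 0 < birkhoffSum T f n x}, f x ∂μ := by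
  have hE : ∀ N, MeasurableSet {x | 0 < partialSups (birkhoffSum T f) N x} := fun N =>
    measurableSet_lt measurable_const
      (Measurable.partialSups (fun n => hf.birkhoffSum hT.measurable n) N)
  have hmono : Monotone fun N => {x | 0 < partialSups (birkhoffSum T f) N x} := by
    intro N N' hN x hx
    exact lt_of_lt_of_le hx (partialSups_monotone (birkhoffSum T f) hN x)
  have hU : (⋃ N, {x | 0 < partialSups (birkhoffSum T f) N x}) =
      {x | ∃ n, 0 < birkhoffSum T f n x} := by
    ext x
    simp only [mem_iUnion, mem_ofPred_eq, Pi.partialSups_apply, ← not_le, partialSups_le_iff]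
    push Not
    exact ⟨fun ⟨_, n, _, hn⟩ => ⟨n, hn⟩, fun ⟨n, hn⟩ => ⟨n, n, le_rfl, hn⟩⟩
  rw [← hU]
  exact ge_of_tendsto' (tendsto_setIntegral_of_monotone hE hmono hfi.integrableOn)
    (setIntegral_partialSups_birkhoffSum_pos_nonneg hT hf hfi)

lemma ae_bddAbove_birkhoffSum_of_integral_neg (hT : Ergodic T μ)
    (hf : Measurable f) (hfi : Integrable f μ) (hneg : ∫ x, f x ∂μ < 0) :
    ∀ᵐ x ∂μ, BddAbove (range fun n => birkhoffSum T f n x) := by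
  have hA := measurableSet_bddAbove_range fun n => hf.birkhoffSum hT.measurable n
  refine (hT.ae_mem_or_ae_notMem hA preimage_setOf_bddAbove_birkhoffSum).resolve_right
    fun hunbdd => hneg.not_ge ?_
  have hpos : ∀ᵐ x ∂μ, x ∈ {x | ∃ n, 0 < birkhoffSum T f n x} := by
    filter_upwards [hunbdd] with x hx
    by_contra! h
    exact hx ⟨0, forall_mem_range.2 h⟩
  simpa [Measure.restrict_eq_self_of_ae_mem hpos] using
    maximal_ergodic_theorem hT.toMeasurePreserving hf hfi

lemma ae_eventually_birkhoffAverage_lt [IsProbabilityMeasure μ] (hT : Ergodic T μ)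
    (hf : Measurable f) (hfi : Integrable f μ) {c : ℝ} (hc : ∫ x, f x ∂μ < c) :
    ∀ᵐ x ∂μ, ∀ᶠ n in atTop, birkhoffAverage ℝ T f n x < c := by
  obtain ⟨c', hfc', hc'c⟩ := exists_between hc
  have hneg : ∫ x, (f x - c') ∂μ < 0 := by
    rw [integral_sub hfi (integrable_const c'), integral_const, probReal_univ, one_smul]
    linarith
  filter_upwards [ae_bddAbove_birkhoffSum_of_integral_neg (f := f - fun _ => c') hT
    (hf.sub measurable_const) (hfi.sub (integrable_const c')) hneg] with x ⟨C, hC⟩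
  have hlim : Tendsto (fun n : ℕ => c' + (n : ℝ)⁻¹ * C) atTop (𝓝 c') := by
    simpa using tendsto_const_nhds.add ((tendsto_inv_atTop_nhds_zero_nat (𝕜 := ℝ)).mul_const C)
  filter_upwards [hlim.eventually (gt_mem_nhds hc'c),
    eventually_ne_atTop 0] with n hn hn0
  refine lt_of_le_of_lt ?_ hn
  have hconst : birkhoffAverage ℝ T (fun _ => c') n = fun _ => c' :=
    birkhoffAverage_of_comp_eq ℝ rfl (Nat.cast_ne_zero.2 hn0)
  have hsub : birkhoffAverage ℝ T (f - fun _ => c') n x ≤ (n : ℝ)⁻¹ * C :=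
    mul_le_mul_of_nonneg_left (hC (mem_range_self n)) (inv_nonneg.2 n.cast_nonneg)
  rw [birkhoffAverage_sub, Pi.sub_apply, Pi.sub_apply, hconst] at hsub
  linarith

lemma ae_forall_eventually_birkhoffAverage_lt [IsProbabilityMeasure μ] (hT : Ergodic T μ)
    (hf : Measurable f) (hfi : Integrable f μ) :
    ∀ᵐ x ∂μ, ∀ c, ∫ y, f y ∂μ < c → ∀ᶠ n in atTop, birkhoffAverage ℝ T f n x < c := by
  have hrat : ∀ᵐ x ∂μ, ∀ q : ℚ, ∫ y, f y ∂μ < q →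
      ∀ᶠ n in atTop, birkhoffAverage ℝ T f n x < q :=
    ae_all_iff.2 fun q => eventually_imp_distrib_left.2 (ae_eventually_birkhoffAverage_lt hT hf hfi)
  filter_upwards [hrat] with x hx c hc
  obtain ⟨q, hfq, hqc⟩ := exists_rat_btwn hc
  exact (hx q hfq).mono fun n hn => hn.trans hqc

theorem ae_tendsto_birkhoffAverage [IsProbabilityMeasure μ] (hT : Ergodic T μ)
    (hf : Measurable f) (hfi : Integrable f μ) :
    ∀ᵐ x ∂μ, Tendsto (birkhoffAverage ℝ T f · x) atTop (𝓝 (∫ y, f y ∂μ)) := by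
  filter_upwards [ae_forall_eventually_birkhoffAverage_lt hT hf hfi,
    ae_forall_eventually_birkhoffAverage_lt hT hf.neg hfi.neg] with x hup hlow
  refine tendsto_order.2 ⟨fun a ha => ?_, hup⟩
  filter_upwards [hlow (-a) (by simpa only [Pi.neg_apply, integral_neg] using neg_lt_neg ha)]
    with n hn
  rw [birkhoffAverage_neg] at hn
  exact neg_lt_neg_iff.1 hn

end Birkhoff

lemma abs_birkhoffAverage_le {α : Type*} {T : α → α} {φ G : α → ℝ} {n : ℕ} {x : α}
    (h : ∀ i < n, |φ (T^[i] x)| ≤ G (T^[i] x)) :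
    |birkhoffAverage ℝ T φ n x| ≤ birkhoffAverage ℝ T G n x := by
  simp only [birkhoffAverage, birkhoffSum, smul_eq_mul, abs_mul, abs_inv, Nat.abs_cast]
  gcongr
  exact (Finset.abs_sum_le_sum_abs _ _).trans
    (Finset.sum_le_sum fun i hi => h i (Finset.mem_range.1 hi))

section TailSup

variable {u : ℕ → ℝ} {a : ℝ}

lemma abs_sub_le_iSup_abs_sub (hu : Tendsto u atTop (𝓝 a)) {m n : ℕ} (hmn : m ≤ n) :
    |u n - a| ≤ ⨆ k, |u (m + k) - a| := by
  obtain ⟨k, rfl⟩ := Nat.exists_eq_add_of_le hmn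
  have hbdd : BddAbove (range fun n => |u n - a|) := (hu.sub_const a).abs.bddAbove_range
  exact le_ciSup (hbdd.mono (range_subset_iff.2 fun k => mem_range_self (m + k))) k

lemma iSup_abs_sub_le {C : ℝ} (hu : ∀ n, |u n| ≤ C) (ha : |a| ≤ C) (m : ℕ) :
    ⨆ k, |u (m + k) - a| ≤ 2 * C :=
  ciSup_le fun k => (abs_sub _ _).trans (by linarith [hu (m + k)])

lemma tendsto_iSup_abs_sub (hu : Tendsto u atTop (𝓝 a)) :
    Tendsto (fun m => ⨆ k, |u (m + k) - a|) atTop (𝓝 0) := by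
  refine tendsto_order.2 ⟨fun b hb => Eventually.of_forall fun m =>
    hb.trans_le (Real.iSup_nonneg fun k => abs_nonneg _), fun c hc => ?_⟩
  obtain ⟨N, hN⟩ := Metric.tendsto_atTop.1 hu (c / 2) (half_pos hc)
  filter_upwards [eventually_ge_atTop N] with m hm
  refine lt_of_le_of_lt (ciSup_le fun k => ?_) (half_lt_self hc)
  exact (hN (m + k) (by omega)).le

end TailSup

lemma tendsto_of_forall_eventually_dist_le {ι E : Type*} [PseudoMetricSpace E] {l : Filter ι}
    {u : ι → E} {L : E} {b : ℕ → ι → ℝ} {β : ℕ → ℝ}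
    (hb : ∀ m, Tendsto (b m) l (𝓝 (β m))) (hβ : Tendsto β atTop (𝓝 0))
    (h : ∀ m, ∀ᶠ i in l, dist (u i) L ≤ b m i) : Tendsto u l (𝓝 L) := by
  refine Metric.tendsto_nhds.2 fun ε hε => ?_
  obtain ⟨m, hm⟩ := (hβ.eventually (gt_mem_nhds hε)).exists
  filter_upwards [h m, (hb m).eventually (gt_mem_nhds hm)] with i hi hbi
  exact hi.trans_lt hbi

theorem ae_tendsto_birkhoffAverage_of_dominated {α : Type*} [MeasurableSpace α] {μ : Measure α}
    [IsProbabilityMeasure μ] {T : α → α} (hT : Ergodic T μ) {g : ℕ → α → ℝ} {g₀ F : α → ℝ}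
    (hg : ∀ n, Measurable (g n)) (hg₀ : Measurable g₀) (hF : Integrable F μ)
    (hbound : ∀ n, ∀ᵐ x ∂μ, |g n x| ≤ F x)
    (hlim : ∀ᵐ x ∂μ, Tendsto (g · x) atTop (𝓝 (g₀ x))) :
    ∀ᵐ x ∂μ, Tendsto (fun n => birkhoffAverage ℝ T (g n) n x) atTop (𝓝 (∫ y, g₀ y ∂μ)) := by
  set G : ℕ → α → ℝ := fun m x => ⨆ k, |g (m + k) x - g₀ x|
  have hg₀F : ∀ᵐ x ∂μ, |g₀ x| ≤ F x := by
    filter_upwards [hlim, ae_all_iff.2 hbound] with x hx hxF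
    exact le_of_tendsto' hx.abs hxF
  have hG : ∀ m, Measurable (G m) := fun m => Measurable.iSup fun k => ((hg _).sub hg₀).abs
  have hGF : ∀ m, ∀ᵐ x ∂μ, ‖G m x‖ ≤ 2 * F x := fun m => by
    filter_upwards [ae_all_iff.2 hbound, hg₀F] with x hxF hx₀F
    rw [Real.norm_of_nonneg (Real.iSup_nonneg fun k => abs_nonneg _)]
    exact iSup_abs_sub_le hxF hx₀F m
  have hGi : ∀ m, Integrable (G m) μ := fun m =>
    (hF.const_mul 2).mono' (hG m).aestronglyMeasurable (hGF m)
  have hGlim : Tendsto (fun m => ∫ x, G m x ∂μ) atTop (𝓝 0) := by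
    simpa using tendsto_integral_of_dominated_convergence _ (fun m => (hG m).aestronglyMeasurable)
      (hF.const_mul 2) hGF (hlim.mono fun x => tendsto_iSup_abs_sub)
  have horbit : ∀ᵐ x ∂μ, ∀ i, Tendsto (g · (T^[i] x)) atTop (𝓝 (g₀ (T^[i] x))) :=
    ae_all_iff.2 fun i => (hT.toMeasurePreserving.iterate i).quasiMeasurePreserving.ae hlim
  filter_upwards [horbit,
    ae_tendsto_birkhoffAverage hT hg₀ (hF.mono' hg₀.aestronglyMeasurable hg₀F),
    ae_all_iff.2 fun m => ae_tendsto_birkhoffAverage hT (hG m) (hGi m)] with x hx hx₀ hxG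
  refine tendsto_of_forall_eventually_dist_le
    (fun m => (hxG m).add (tendsto_iff_dist_tendsto_zero.1 hx₀)) (by simpa using hGlim)
    fun m => ?_
  filter_upwards [eventually_ge_atTop m] with n hn
  refine (dist_triangle _ (birkhoffAverage ℝ T g₀ n x) _).trans (add_le_add_left ?_ _)
  rw [Real.dist_eq, ← Pi.sub_apply, ← Pi.sub_apply (birkhoffAverage ℝ T (g n)),
    ← birkhoffAverage_sub]
  exact abs_birkhoffAverage_le fun i _ => abs_sub_le_iSup_abs_sub (hx i) hn

theorem breiman_generalized_ergodic_theorem_general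
    {S : Type*} [MeasurableSpace S]
    (P : Measure (ℕ → S)) [IsProbabilityMeasure P]
    (T : (ℕ → S) → ℕ → S)
    (hErg : Ergodic T P)
    (g : ℕ → (ℕ → S) → ℝ) (g₀ : (ℕ → S) → ℝ)
    (hg_meas : ∀ n, Measurable (g n)) (hg₀_meas : Measurable g₀)
    (hconv : ∀ᵐ ω ∂P, Tendsto (fun n => g n ω) atTop (nhds (g₀ ω)))
    (hdom : ∫⁻ ω, ⨆ n, ENNReal.ofReal |g n ω| ∂P < ⊤) :
    ∀ᵐ ω ∂P,
      Tendsto (fun n : ℕ => (1 / n : ℝ) * ∑ i ∈ Finset.range n, g n (T^[i] ω))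
        atTop (nhds (∫ ω, g₀ ω ∂P)) := by
  have hsup : Measurable fun ω => ⨆ n, ENNReal.ofReal |g n ω| :=
    Measurable.iSup fun n => (hg_meas n).abs.ennreal_ofReal
  have hbound : ∀ n, ∀ᵐ ω ∂P, |g n ω| ≤ (⨆ n, ENNReal.ofReal |g n ω|).toReal := fun n => by
    filter_upwards [ae_lt_top hsup hdom.ne] with ω hω
    exact (ENNReal.ofReal_le_iff_le_toReal hω.ne).1 (le_iSup (fun k => ENNReal.ofReal |g k ω|) n)
  filter_upwards [ae_tendsto_birkhoffAverage_of_dominated hErg hg_meas hg₀_meas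
    (integrable_toReal_of_lintegral_ne_top hsup.aemeasurable hdom.ne) hbound hconv] with ω hω
  simpa [birkhoffAverage, birkhoffSum, one_div] using hω

/-- **Breiman's generalized ergodic theorem.** Let `P` be a stationary ergodic law
on `S^ℕ` (i.e. invariant and ergodic for the left shift `T`). If the measurable
functions `g_n` satisfy `g_n → g` `P`-a.s. and `E[sup_n |g_n|] < ∞`, then
`(1/n) ∑_{i=0}^{n-1} g_n(T^i X) → E[g(X)]` almost surely. -/
theorem breiman_generalized_ergodic_theorem
    {S : Type*} [MeasurableSpace S]
    (P : Measure (ℕ → S)) [IsProbabilityMeasure P]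
    (T : (ℕ → S) → ℕ → S) (hT : T = fun ω k => ω (k + 1))
    (hErg : Ergodic T P)
    (g : ℕ → (ℕ → S) → ℝ) (g₀ : (ℕ → S) → ℝ)
    (hg_meas : ∀ n, Measurable (g n)) (hg₀_meas : Measurable g₀)
    (hconv : ∀ᵐ ω ∂P, Tendsto (fun n => g n ω) atTop (nhds (g₀ ω)))
    (hdom : ∫⁻ ω, ⨆ n, ENNReal.ofReal |g n ω| ∂P < ⊤) :
    ∀ᵐ ω ∂P,
      Tendsto (fun n : ℕ => (1 / n : ℝ) * ∑ i ∈ Finset.range n, g n (T^[i] ω))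
        atTop (nhds (∫ ω, g₀ ω ∂P)) :=
  breiman_generalized_ergodic_theorem_general P T hErg g g₀ hg_meas hg₀_meas hconv hdom
end

section
/- Let X_1, …, X_n (n ≥ 3) be i.i.d. random vectors in ℝ^d with density f and distribution μ, and set R_{n,1}(X_1) = min_{2 ≤ j ≤ n} ‖X_1 − X_j‖ and R_{n−1,1}(X_1) = min_{2 ≤ j ≤ n−1} ‖X_1 − X_j‖. Then (n−1) · E[(ln(μ(B(X_1, R_{n−1,1}(X_1))) / μ(B(X_1, R_{n,1}(X_1)))))^4] ≤ ∫_0^∞ e^{−s^{1/4}} ds (= 24). -/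
open MeasureTheory ProbabilityTheory Filter Metric
open scoped ENNReal

noncomputable section

/-- The distribution `μ` on `ℝ^d` with density `f` w.r.t. Lebesgue measure. -/
def densMeasure (d : ℕ) (f : EuclideanSpace ℝ (Fin d) → ℝ) :
    Measure (EuclideanSpace ℝ (Fin d)) :=
  volume.withDensity fun x => ENNReal.ofReal (f x)

/-- `R_{n,i}(x) = min_{j < n, j ≠ i} ‖x - X_j‖` (0-based indexing of the sample). -/
def nnDist {E : Type*} [PseudoMetricSpace E] {Ω : Type*} (X : ℕ → Ω → E)
    (n i : ℕ) (x : E) (ω : Ω) : ℝ :=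
  sInf ((fun j => dist x (X j ω)) '' {j | j < n ∧ j ≠ i})

/-!
Write `R` for the nearest-neighbour distance of `X₁` among `X₂, …, X_{n-1}`, `Z = μ(B(X₁, R))`,
and `Y = X_n`. Since spheres are `μ`-null, `y ↦ μ(B(x, ‖x - y‖))` is uniform on `[0, 1]` under `μ`
(the probability integral transform of the law of `‖x - y‖`). Given the other points, the
log-ratio exceeds `t > 0` only if `μ(B(X₁, ‖X₁ - Y‖)) ≤ e^{-t} Z`, which has conditional
probability at most `e^{-t} Z`; and `Z` is the minimum of `n - 2` independent uniforms, so
`E Z ≤ 1 / (n - 1)`. Hence `(n - 1) P(log-ratio > t) ≤ e^{-t}`, and the layer-cake formula turns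
this tail bound into the bound `∫₀^∞ e^{-s^{1/4}} ds` on the fourth moment.
-/

open Measure Set

namespace ProbabilityTheory

variable {ν : Measure ℝ} [IsProbabilityMeasure ν]

lemma continuous_cdf [NullSingletonClass ν] : Continuous (cdf ν) := by
  refine continuous_iff_continuousAt.2 fun a ↦ continuousAt_iff_continuous_left_right.2
    ⟨?_, (cdf ν).right_continuous a⟩
  rw [← continuousWithinAt_Iio_iff_Iic, (monotone_cdf ν).continuousWithinAt_Iio_iff_leftLim_eq]
  have h := (cdf ν).measure_singleton a
  rw [measure_cdf, measure_singleton, eq_comm, ENNReal.ofReal_eq_zero, sub_nonpos] at h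
  exact le_antisymm ((monotone_cdf ν).leftLim_le le_rfl) h

lemma measure_cdf_le [NullSingletonClass ν] {u : ℝ} (hu₀ : 0 ≤ u) (hu₁ : u ≤ 1) :
    ν {r | cdf ν r ≤ u} = ENNReal.ofReal u := by
  rcases hu₁.eq_or_lt with rfl | hu₁
  · simp [cdf_le_one]
  set S := {r | cdf ν r ≤ u}
  rcases S.eq_empty_or_nonempty with hS | hS
  · have hu : u = 0 := by
      by_contra hu
      obtain ⟨r, hr⟩ :=
        ((tendsto_cdf_atBot ν).eventually (gt_mem_nhds (hu₀.lt_of_ne' hu))).exists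
      exact (Set.eq_empty_iff_forall_notMem.1 hS) r hr.le
    simp [hS, hu]
  obtain ⟨b, hb⟩ := eventually_atTop.1 ((tendsto_cdf_atTop ν).eventually (lt_mem_nhds hu₁))
  have hbdd : BddAbove S := ⟨b, fun r hr ↦ le_of_not_gt fun h ↦ (hb r h.le).not_ge hr⟩
  have hmem : sSup S ∈ S :=
    (isClosed_le continuous_cdf continuous_const).csSup_mem hS hbdd
  have hS_eq : S = Iic (sSup S) :=
    Set.ext fun r ↦ ⟨fun hr ↦ le_csSup hbdd hr, fun hr ↦ (monotone_cdf ν hr).trans hmem⟩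
  have hcdf : cdf ν (sSup S) = u := by
    refine le_antisymm hmem (ge_of_tendsto ((cdf ν).right_continuous _ |>.mono Ioi_subset_Ici_self)
      (eventually_nhdsWithin_of_forall fun r hr ↦ ?_))
    exact le_of_lt (not_le.1 fun h ↦ (not_le.2 hr) (le_csSup hbdd h))
  rw [hS_eq, ← ofReal_cdf, hcdf]

end ProbabilityTheory

section BallMass

variable {E : Type*} [PseudoMetricSpace E] [MeasurableSpace E] [OpensMeasurableSpace E]
  {μ : Measure E}

lemma measurable_measure_closedBall [SecondCountableTopology E] [SFinite μ] :
    Measurable fun p : E × ℝ ↦ μ (closedBall p.1 p.2) := by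
  have hS : MeasurableSet {q : (E × ℝ) × E | dist q.2 q.1.1 ≤ q.1.2} :=
    (isClosed_le (by fun_prop) (by fun_prop)).measurableSet
  exact measurable_measure_prodMk_left hS

variable [IsProbabilityMeasure μ]

lemma cdf_map_dist (x : E) (r : ℝ) : cdf (μ.map (dist x)) r = μ.real (closedBall x r) := by
  have : IsProbabilityMeasure (μ.map (dist x)) := isProbabilityMeasure_map (by fun_prop)
  have hball : dist x ⁻¹' Iic r = closedBall x r := by ext y; simp [dist_comm]
  rw [cdf_eq_real, map_measureReal_apply (by fun_prop) measurableSet_Iic, hball]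

variable {x : E}

lemma measure_measureReal_closedBall_dist_le (hx : ∀ r, μ (sphere x r) = 0) {u : ℝ}
    (hu₀ : 0 ≤ u) (hu₁ : u ≤ 1) :
    μ {y | μ.real (closedBall x (dist x y)) ≤ u} = ENNReal.ofReal u := by
  have hdist : Measurable (dist x) := by fun_prop
  set ν := μ.map (dist x)
  have : IsProbabilityMeasure ν := isProbabilityMeasure_map hdist.aemeasurable
  have : NullSingletonClass ν := ⟨fun r ↦ by
    rw [map_apply hdist (measurableSet_singleton r), ← hx r]
    congr 1 with y
    simp [dist_comm]⟩
  have hset : {y | μ.real (closedBall x (dist x y)) ≤ u} = dist x ⁻¹' {r | cdf ν r ≤ u} := by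
    simp only [ν, cdf_map_dist]; rfl
  rw [hset, ← map_apply hdist (measurableSet_le (monotone_cdf ν).measurable measurable_const),
    measure_cdf_le hu₀ hu₁]

lemma measure_lt_measureReal_closedBall_dist [SecondCountableTopology E]
    (hx : ∀ r, μ (sphere x r) = 0) {u : ℝ} (hu₀ : 0 ≤ u) :
    μ {y | u < μ.real (closedBall x (dist x y))} = ENNReal.ofReal (1 - u) := by
  rcases le_or_gt u 1 with hu₁ | hu₁
  · have hmeas : MeasurableSet {y | μ.real (closedBall x (dist x y)) ≤ u} :=
      measurableSet_le ((measurable_measure_closedBall.comp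
        (measurable_const.prodMk (measurable_const.dist measurable_id))).ennreal_toReal)
        measurable_const
    simp_rw [← not_le]
    rw [← Set.compl_ofPred, prob_compl_eq_one_sub hmeas,
      measure_measureReal_closedBall_dist_le hx hu₀ hu₁, ENNReal.ofReal_sub _ hu₀,
      ENNReal.ofReal_one]
  · have : {y | u < μ.real (closedBall x (dist x y))} = ∅ :=
      Set.eq_empty_of_forall_notMem fun y hy ↦ (hu₁.trans hy).not_ge measureReal_le_one
    rw [this, measure_empty, ENNReal.ofReal_of_nonpos (by linarith)]

end BallMass

lemma Real.lt_exp_neg_mul_of_lt_log_div {a b t : ℝ} (ha : 0 ≤ a) (hb : 0 ≤ b) (ht : 0 < t)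
    (h : t < Real.log (b / a)) : a < Real.exp (-t) * b := by
  have hba : 0 < b / a := by
    refine (div_nonneg hb ha).lt_of_ne fun h0 ↦ ?_
    rw [← h0, Real.log_zero] at h
    exact ht.not_gt h
  have ha' : 0 < a := ha.lt_of_ne fun h0 ↦ by simp [← h0] at hba
  have hexp : Real.exp t * a < b := (lt_div_iff₀ ha').1 ((Real.lt_log_iff_exp_lt hba).1 h)
  calc a = Real.exp (-t) * (Real.exp t * a) := by rw [← mul_assoc, ← Real.exp_add]; simp
    _ < Real.exp (-t) * b := by gcongr

lemma Real.log_div_nonneg {a b : ℝ} (ha : 0 ≤ a) (hab : a ≤ b) : 0 ≤ Real.log (b / a) := by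
  rcases ha.eq_or_lt with rfl | ha
  · simp
  · exact Real.log_nonneg ((one_le_div ha).2 hab)

lemma setLIntegral_Ioc_ofReal_one_sub_pow (k : ℕ) :
    ∫⁻ u in Ioc (0 : ℝ) 1, ENNReal.ofReal ((1 - u) ^ k) = ((k : ℝ≥0∞) + 1)⁻¹ := by
  have hint : ∫ u in Ioc (0 : ℝ) 1, (1 - u) ^ k = 1 / (k + 1) := by
    rw [← intervalIntegral.integral_of_le zero_le_one,
      intervalIntegral.integral_comp_sub_left (fun u ↦ u ^ k) 1]
    norm_num [integral_pow]
  rw [← ofReal_integral_eq_lintegral_ofReal (Continuous.integrableOn_Ioc (by fun_prop))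
    (ae_restrict_of_forall_mem measurableSet_Ioc fun u hu ↦ pow_nonneg (by linarith [hu.2]) k),
    hint, one_div, ENNReal.ofReal_inv_of_pos (by positivity)]
  norm_cast

lemma lintegral_ofReal_pow_le_of_measure_lt_le {Ω : Type*} [MeasurableSpace Ω] {P : Measure Ω}
    {G : Ω → ℝ} (hG : Measurable G) (hG₀ : ∀ ω, 0 ≤ G ω) {C : ℝ≥0∞}
    (htail : ∀ t, 0 < t → P {ω | t < G ω} ≤ C * ENNReal.ofReal (Real.exp (-t)))
    {p : ℕ} (hp : p ≠ 0) :
    ∫⁻ ω, ENNReal.ofReal (G ω ^ p) ∂P ≤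
      C * ∫⁻ s in Ioi 0, ENNReal.ofReal (Real.exp (-s ^ ((1 : ℝ) / p))) := by
  rw [lintegral_eq_lintegral_meas_lt P (ae_of_all _ fun ω ↦ pow_nonneg (hG₀ ω) p)
    (hG.pow_const p).aemeasurable, ← lintegral_const_mul _ (by fun_prop)]
  refine setLIntegral_mono' measurableSet_Ioi fun s hs ↦ ?_
  have hroot : {ω | s < G ω ^ p} = {ω | s ^ ((1 : ℝ) / p) < G ω} := by
    ext ω
    rw [mem_ofPred_eq, mem_ofPred_eq, one_div,
      Real.rpow_inv_lt_iff_of_pos (le_of_lt hs) (hG₀ ω) (by positivity), Real.rpow_natCast]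
  rw [hroot]
  exact htail _ (Real.rpow_pos_of_pos hs _)

section NearestNeighbour

variable {E : Type*} [PseudoMetricSpace E] {ι : Type*}

def nnRadius (x : E) (v : ι → E) : ℝ := ⨅ j, dist x (v j)

lemma nnRadius_le_dist [Finite ι] (x : E) (v : ι → E) (j : ι) : nnRadius x v ≤ dist x (v j) :=
  ciInf_le (Finite.bddBelow_range _) j

def logBallRatio [MeasurableSpace E] (μ : Measure E) (x : E) (v : ι → E) (y : E) : ℝ :=
  Real.log (μ.real (closedBall x (nnRadius x v)) /
    μ.real (closedBall x (min (nnRadius x v) (dist x y))))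

variable [MeasurableSpace E] {μ : Measure E}

lemma logBallRatio_nonneg [IsFiniteMeasure μ] (x : E) (v : ι → E) (y : E) :
    0 ≤ logBallRatio μ x v y :=
  Real.log_div_nonneg measureReal_nonneg
    (measureReal_mono (closedBall_subset_closedBall (min_le_left _ _)))

variable [OpensMeasurableSpace E]

lemma measure_lt_logBallRatio_le [IsProbabilityMeasure μ] {x : E}
    (hx : ∀ r, μ (sphere x r) = 0) (v : ι → E) {t : ℝ} (ht : 0 < t) :
    μ {y | t < logBallRatio μ x v y} ≤
      ENNReal.ofReal (Real.exp (-t)) * μ (closedBall x (nnRadius x v)) := by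
  set R := nnRadius x v
  have hexp : Real.exp (-t) < 1 := Real.exp_lt_one_iff.2 (neg_neg_of_pos ht)
  have hsub : {y | t < logBallRatio μ x v y} ⊆
      {y | μ.real (closedBall x (dist x y)) ≤ Real.exp (-t) * μ.real (closedBall x R)} := by
    intro y hy
    have hlt := Real.lt_exp_neg_mul_of_lt_log_div measureReal_nonneg measureReal_nonneg ht hy
    have hd : dist x y < R := by
      by_contra! hR
      rw [min_eq_left hR] at hlt
      exact hlt.not_ge (mul_le_of_le_one_left measureReal_nonneg hexp.le)
    rw [min_eq_right hd.le] at hlt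
    exact hlt.le
  calc μ {y | t < logBallRatio μ x v y}
      ≤ μ {y | μ.real (closedBall x (dist x y)) ≤ Real.exp (-t) * μ.real (closedBall x R)} :=
        measure_mono hsub
    _ = ENNReal.ofReal (Real.exp (-t) * μ.real (closedBall x R)) :=
        measure_measureReal_closedBall_dist_le hx (by positivity)
          (mul_le_one₀ hexp.le measureReal_nonneg measureReal_le_one)
    _ = ENNReal.ofReal (Real.exp (-t)) * μ (closedBall x R) := by
        rw [ENNReal.ofReal_mul (Real.exp_pos _).le, ofReal_measureReal]

variable [SecondCountableTopology E] [Fintype ι]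

lemma measurable_nnRadius : Measurable fun p : E × (ι → E) ↦ nnRadius p.1 p.2 :=
  Measurable.iInf fun j ↦ measurable_fst.dist ((measurable_pi_apply j).comp measurable_snd)

lemma measurable_logBallRatio [SFinite μ] :
    Measurable fun p : E × E × (ι → E) ↦ logBallRatio μ p.2.1 p.2.2 p.1 := by
  have hx : Measurable fun p : E × E × (ι → E) ↦ p.2.1 := measurable_snd.fst
  have hR : Measurable fun p : E × E × (ι → E) ↦ nnRadius p.2.1 p.2.2 :=
    measurable_nnRadius.comp measurable_snd
  exact Real.measurable_log.comp
    ((measurable_measure_closedBall.comp (hx.prodMk hR)).ennreal_toReal.div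
      (measurable_measure_closedBall.comp
        (hx.prodMk (hR.min (hx.dist measurable_fst)))).ennreal_toReal)

variable [IsProbabilityMeasure μ] {x : E}

lemma measure_pi_lt_measureReal_closedBall_nnRadius_le (hx : ∀ r, μ (sphere x r) = 0) {u : ℝ}
    (hu : 0 < u) :
    (Measure.pi fun _ : ι ↦ μ) {v | u < μ.real (closedBall x (nnRadius x v))} ≤
      (Ioc 0 1).indicator (fun u ↦ ENNReal.ofReal ((1 - u) ^ Fintype.card ι)) u := by
  rcases le_or_gt u 1 with hu₁ | hu₁
  · rw [indicator_of_mem (show u ∈ Ioc 0 1 from ⟨hu, hu₁⟩), ENNReal.ofReal_pow (by linarith)]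
    calc _ ≤ (Measure.pi fun _ : ι ↦ μ)
          (univ.pi fun _ ↦ {y | u < μ.real (closedBall x (dist x y))}) :=
          measure_mono fun v hv j _ ↦ hv.trans_le
            (measureReal_mono (closedBall_subset_closedBall (nnRadius_le_dist x v j)))
      _ = _ := by
          rw [pi_pi, measure_lt_measureReal_closedBall_dist hx hu.le, Finset.prod_const,
            Finset.card_univ]
  · have : {v : ι → E | u < μ.real (closedBall x (nnRadius x v))} = ∅ :=
      eq_empty_of_forall_notMem fun v hv ↦ (hu₁.trans hv).not_ge measureReal_le_one
    simp [this]

lemma lintegral_measure_closedBall_nnRadius_le (hx : ∀ r, μ (sphere x r) = 0) :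
    ∫⁻ v, μ (closedBall x (nnRadius x v)) ∂(Measure.pi fun _ : ι ↦ μ) ≤
      ((Fintype.card ι : ℝ≥0∞) + 1)⁻¹ := by
  set π := Measure.pi fun _ : ι ↦ μ
  set g : ℝ → ℝ≥0∞ := fun u ↦ ENNReal.ofReal ((1 - u) ^ Fintype.card ι)
  have hZ : Measurable fun v : ι → E ↦ μ.real (closedBall x (nnRadius x v)) :=
    (measurable_measure_closedBall.comp (measurable_const.prodMk
      (measurable_nnRadius.comp (measurable_const.prodMk measurable_id)))).ennreal_toReal
  calc ∫⁻ v, μ (closedBall x (nnRadius x v)) ∂π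
      = ∫⁻ v, ENNReal.ofReal (μ.real (closedBall x (nnRadius x v))) ∂π :=
        lintegral_congr fun v ↦ (ofReal_measureReal (measure_ne_top _ _)).symm
    _ = ∫⁻ u in Ioi 0, π {v | u < μ.real (closedBall x (nnRadius x v))} :=
        lintegral_eq_lintegral_meas_lt π (ae_of_all _ fun _ ↦ measureReal_nonneg) hZ.aemeasurable
    _ ≤ ∫⁻ u in Ioi 0, (Ioc 0 1).indicator g u := setLIntegral_mono' measurableSet_Ioi
        fun u hu ↦ measure_pi_lt_measureReal_closedBall_nnRadius_le hx hu
    _ ≤ ∫⁻ u, (Ioc 0 1).indicator g u := setLIntegral_le_lintegral _ _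
    _ = ((Fintype.card ι : ℝ≥0∞) + 1)⁻¹ := by
        rw [lintegral_indicator measurableSet_Ioc, setLIntegral_Ioc_ofReal_one_sub_pow]

lemma measure_prod_lt_logBallRatio_le (hμ : ∀ x r, μ (sphere x r) = 0) {t : ℝ} (ht : 0 < t) :
    (μ.prod (μ.prod (Measure.pi fun _ : ι ↦ μ))) {p | t < logBallRatio μ p.2.1 p.2.2 p.1} ≤
      ((Fintype.card ι : ℝ≥0∞) + 1)⁻¹ * ENNReal.ofReal (Real.exp (-t)) := by
  set π := Measure.pi fun _ : ι ↦ μ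
  rw [prod_apply_symm (measurableSet_lt measurable_const measurable_logBallRatio)]
  calc ∫⁻ q, μ ((·, q) ⁻¹' {p | t < logBallRatio μ p.2.1 p.2.2 p.1}) ∂(μ.prod π)
      ≤ ∫⁻ q, ENNReal.ofReal (Real.exp (-t)) * μ (closedBall q.1 (nnRadius q.1 q.2)) ∂(μ.prod π) :=
        lintegral_mono fun q ↦ measure_lt_logBallRatio_le (hμ q.1) q.2 ht
    _ = ENNReal.ofReal (Real.exp (-t)) * ∫⁻ x, ∫⁻ v, μ (closedBall x (nnRadius x v)) ∂π ∂μ := by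
        rw [lintegral_const_mul' _ _ ENNReal.ofReal_ne_top,
          lintegral_prod (fun q : E × (ι → E) ↦ μ (closedBall q.1 (nnRadius q.1 q.2)))
            (measurable_measure_closedBall.comp
              (measurable_fst.prodMk measurable_nnRadius)).aemeasurable]
    _ ≤ ENNReal.ofReal (Real.exp (-t)) * ∫⁻ _, ((Fintype.card ι : ℝ≥0∞) + 1)⁻¹ ∂μ := by
        gcongr with x
        exact lintegral_measure_closedBall_nnRadius_le (hμ x)
    _ = _ := by rw [lintegral_const, measure_univ, mul_one, mul_comm]

lemma lintegral_logBallRatio_pow_le (hμ : ∀ x r, μ (sphere x r) = 0) {p : ℕ} (hp : p ≠ 0) :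
    ((Fintype.card ι : ℝ≥0∞) + 1) * ∫⁻ q, ENNReal.ofReal (logBallRatio μ q.2.1 q.2.2 q.1 ^ p)
        ∂(μ.prod (μ.prod (Measure.pi fun _ : ι ↦ μ))) ≤
      ∫⁻ s in Ioi 0, ENNReal.ofReal (Real.exp (-s ^ ((1 : ℝ) / p))) := by
  calc _ ≤ ((Fintype.card ι : ℝ≥0∞) + 1) * (((Fintype.card ι : ℝ≥0∞) + 1)⁻¹ *
        ∫⁻ s in Ioi 0, ENNReal.ofReal (Real.exp (-s ^ ((1 : ℝ) / p)))) := by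
        gcongr
        exact lintegral_ofReal_pow_le_of_measure_lt_le measurable_logBallRatio
          (fun q ↦ logBallRatio_nonneg _ _ _) (fun t ht ↦ measure_prod_lt_logBallRatio_le hμ ht) hp
    _ = _ := by rw [← mul_assoc, ENNReal.mul_inv_cancel (by positivity) (by finiteness), one_mul]

end NearestNeighbour

section Sample

variable {E : Type*} [PseudoMetricSpace E] {Ω : Type*} (X : ℕ → Ω → E) (x : E) (ω : Ω)

lemma nnDist_succ_zero_eq_nnRadius (k : ℕ) :
    nnDist X (k + 1) 0 x ω = nnRadius x fun j : Fin k ↦ X (j + 1) ω := by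
  have himage : (fun j ↦ dist x (X j ω)) '' {j | j < k + 1 ∧ j ≠ 0} =
      range fun j : Fin k ↦ dist x (X (j + 1) ω) := by
    ext r
    simp only [mem_image, mem_ofPred_eq, mem_range]
    constructor
    · rintro ⟨j, ⟨hj, hj₀⟩, rfl⟩
      exact ⟨⟨j - 1, by omega⟩, by rw [Nat.sub_add_cancel (Nat.one_le_iff_ne_zero.2 hj₀)]⟩
    · rintro ⟨j, rfl⟩
      exact ⟨j + 1, ⟨by omega, by omega⟩, rfl⟩
  rw [nnDist, himage]
  rfl

lemma nnDist_succ {n i : ℕ} (hi : i < n) (hn : 2 ≤ n) :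
    nnDist X (n + 1) i x ω = min (nnDist X n i x ω) (dist x (X n ω)) := by
  have hset : {j | j < n + 1 ∧ j ≠ i} = insert n {j | j < n ∧ j ≠ i} := by
    ext j
    simp only [mem_ofPred_eq, mem_insert_iff]
    omega
  obtain ⟨j, hj⟩ : ∃ j, j < n ∧ j ≠ i := ⟨if i = 0 then 1 else 0, by split_ifs <;> omega⟩
  have hbdd : BddBelow ((fun j ↦ dist x (X j ω)) '' {j | j < n ∧ j ≠ i}) :=
    ⟨0, by rintro _ ⟨j, -, rfl⟩; exact dist_nonneg⟩
  rw [nnDist, hset, image_insert_eq, csInf_insert hbdd ⟨_, mem_image_of_mem _ hj⟩, min_comm]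
  rfl

end Sample

lemma map_eq_prod_prod_pi_of_iIndepFun {Ω E : Type*} [MeasurableSpace Ω] [MeasurableSpace E]
    {P : Measure Ω} {μ : Measure E} {X : ℕ → Ω → E} (hX_meas : ∀ i, Measurable (X i))
    (hX_indep : iIndepFun X P) (hX_law : ∀ i, P.map (X i) = μ) (k : ℕ) :
    P.map (fun ω ↦ (X (k + 1) ω, X 0 ω, fun j : Fin k ↦ X (j + 1) ω)) =
      μ.prod (μ.prod (Measure.pi fun _ ↦ μ)) := by
  have := hX_indep.isProbabilityMeasure
  have : IsProbabilityMeasure μ := hX_law 0 ▸ isProbabilityMeasure_map (hX_meas 0).aemeasurable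
  have hsample : Measurable fun ω (j : Fin (k + 2)) ↦ X j ω :=
    measurable_pi_lambda _ fun j ↦ hX_meas j
  have hlaw : P.map (fun ω (j : Fin (k + 2)) ↦ X j ω) = Measure.pi fun _ ↦ μ := by
    rw [iIndepFun.map_fun_eq_pi_map (f := fun j : Fin (k + 2) ↦ X j)
      (fun j ↦ (hX_meas j).aemeasurable) (hX_indep.precomp Fin.val_injective)]
    simp only [hX_law]
  have hsplit := ((MeasurePreserving.id μ).prod
    (measurePreserving_piFinSuccAbove (fun _ ↦ μ) 0)).comp
    (measurePreserving_piFinSuccAbove (fun _ ↦ μ) (Fin.last (k + 1)))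
  rw [← hsplit.map_eq, ← hlaw, map_map hsplit.measurable hsample]
  congr 1
  funext ω
  simp only [Function.comp_apply, MeasurableEquiv.piFinSuccAbove_apply, Fin.insertNthEquiv_zero,
    Fin.insertNthEquiv_last]
  rfl

lemma lintegral_logBallRatio_pow_le_of_iIndepFun {Ω E : Type*} [MeasurableSpace Ω]
    [PseudoMetricSpace E] [MeasurableSpace E] [OpensMeasurableSpace E] [SecondCountableTopology E]
    {P : Measure Ω} {μ : Measure E} {X : ℕ → Ω → E} (hX_meas : ∀ i, Measurable (X i))
    (hX_indep : iIndepFun X P) (hX_law : ∀ i, P.map (X i) = μ)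
    (hμ : ∀ x r, μ (sphere x r) = 0) (k : ℕ) {p : ℕ} (hp : p ≠ 0) :
    ((k + 1 : ℕ) : ℝ≥0∞) * ∫⁻ ω, ENNReal.ofReal
        (logBallRatio μ (X 0 ω) (fun j : Fin k ↦ X (j + 1) ω) (X (k + 1) ω) ^ p) ∂P ≤
      ∫⁻ s in Ioi 0, ENNReal.ofReal (Real.exp (-s ^ ((1 : ℝ) / p))) := by
  have := hX_indep.isProbabilityMeasure
  have : IsProbabilityMeasure μ := hX_law 0 ▸ isProbabilityMeasure_map (hX_meas 0).aemeasurable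
  have hsample : Measurable fun ω ↦ (X (k + 1) ω, X 0 ω, fun j : Fin k ↦ X (j + 1) ω) :=
    (hX_meas _).prodMk ((hX_meas 0).prodMk (measurable_pi_lambda _ fun j ↦ hX_meas _))
  rw [← lintegral_map (f := fun q : E × E × (Fin k → E) ↦
      ENNReal.ofReal (logBallRatio μ q.2.1 q.2.2 q.1 ^ p))
    (measurable_logBallRatio.pow_const p).ennreal_ofReal hsample,
    map_eq_prod_prod_pi_of_iIndepFun hX_meas hX_indep hX_law]
  simpa using lintegral_logBallRatio_pow_le (ι := Fin k) hμ hp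

lemma densMeasure_sphere {d : ℕ} (hd : 1 ≤ d) (f : EuclideanSpace ℝ (Fin d) → ℝ)
    (x : EuclideanSpace ℝ (Fin d)) (r : ℝ) : densMeasure d f (sphere x r) = 0 := by
  have : Nonempty (Fin d) := ⟨⟨0, hd⟩⟩
  exact withDensity_absolutelyContinuous _ _ (Measure.addHaar_sphere volume x r)

theorem log_ratio_nn_ball_fourth_moment_bound_general
    {d : ℕ} (hd : 1 ≤ d)
    (f : EuclideanSpace ℝ (Fin d) → ℝ)
    {Ω : Type*} [MeasurableSpace Ω] (P : Measure Ω)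
    (X : ℕ → Ω → EuclideanSpace ℝ (Fin d))
    (hX_meas : ∀ i, Measurable (X i))
    (hX_indep : iIndepFun X P)
    (hX_law : ∀ i, Measure.map (X i) P = densMeasure d f)
    (n : ℕ) (hn : 3 ≤ n) :
    ((n - 1 : ℕ) : ℝ≥0∞) *
        ∫⁻ ω, ENNReal.ofReal
          ((Real.log
              ((densMeasure d f
                  (closedBall (X 0 ω) (nnDist X (n - 1) 0 (X 0 ω) ω))).toReal /
                (densMeasure d f
                  (closedBall (X 0 ω) (nnDist X n 0 (X 0 ω) ω))).toReal)) ^ 4) ∂P ≤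
      ENNReal.ofReal (∫ s in Set.Ioi (0 : ℝ), Real.exp (-(s ^ ((1 : ℝ) / 4)))) := by
  obtain ⟨k, rfl⟩ : ∃ k, n = k + 3 := ⟨n - 3, by omega⟩
  rw [show k + 3 - 1 = k + 1 + 1 from rfl]
  have hlog : ∀ ω, Real.log
      ((densMeasure d f (closedBall (X 0 ω) (nnDist X (k + 1 + 1) 0 (X 0 ω) ω))).toReal /
        (densMeasure d f (closedBall (X 0 ω) (nnDist X (k + 3) 0 (X 0 ω) ω))).toReal) =
      logBallRatio (densMeasure d f) (X 0 ω) (fun j : Fin (k + 1) ↦ X (j + 1) ω)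
        (X (k + 1 + 1) ω) := fun ω ↦ by
    rw [nnDist_succ (n := k + 2) X _ ω (by omega) (by omega), nnDist_succ_zero_eq_nnRadius]
    rfl
  have hint : IntegrableOn (fun s : ℝ ↦ Real.exp (-s ^ ((1 : ℝ) / 4))) (Ioi 0) := by
    simpa using integrableOn_rpow_mul_exp_neg_rpow (s := 0) (p := 1 / 4) (by norm_num) (by norm_num)
  simp_rw [hlog]
  rw [ofReal_integral_eq_lintegral_ofReal hint (ae_of_all _ fun _ ↦ (Real.exp_pos _).le)]
  simpa only [Nat.cast_ofNat] using lintegral_logBallRatio_pow_le_of_iIndepFun hX_meas hX_indep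
    hX_law (densMeasure_sphere hd f) (k + 1) four_ne_zero

/-- For i.i.d. `X_1, …, X_n` (`n ≥ 3`) with density `f` and distribution `μ`, with
`R_{n,1}(X_1)` resp. `R_{n−1,1}(X_1)` the nearest-neighbor distance of `X_1` among
`X_2, …, X_n` resp. `X_2, …, X_{n−1}`,
`(n−1)·E[(ln(μ(B(X_1,R_{n−1,1}(X_1)))/μ(B(X_1,R_{n,1}(X_1)))))^4] ≤ ∫_0^∞ e^{−s^{1/4}} ds`. -/
theorem log_ratio_nn_ball_fourth_moment_bound
    {d : ℕ} (hd : 1 ≤ d)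
    (f : EuclideanSpace ℝ (Fin d) → ℝ)
    (hf_meas : Measurable f) (hf_nonneg : ∀ x, 0 ≤ f x)
    (hf_prob : ∫ x, f x = 1)
    {Ω : Type*} [MeasurableSpace Ω] (P : Measure Ω) [IsProbabilityMeasure P]
    (X : ℕ → Ω → EuclideanSpace ℝ (Fin d))
    (hX_meas : ∀ i, Measurable (X i))
    (hX_indep : iIndepFun X P)
    (hX_law : ∀ i, Measure.map (X i) P = densMeasure d f)
    (n : ℕ) (hn : 3 ≤ n) :
    ((n - 1 : ℕ) : ℝ≥0∞) *
        ∫⁻ ω, ENNReal.ofReal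
          ((Real.log
              ((densMeasure d f
                  (closedBall (X 0 ω) (nnDist X (n - 1) 0 (X 0 ω) ω))).toReal /
                (densMeasure d f
                  (closedBall (X 0 ω) (nnDist X n 0 (X 0 ω) ω))).toReal)) ^ 4) ∂P ≤
      ENNReal.ofReal (∫ s in Set.Ioi (0 : ℝ), Real.exp (-(s ^ ((1 : ℝ) / 4)))) :=
  log_ratio_nn_ball_fourth_moment_bound_general hd f P X hX_meas hX_indep hX_law n hn
end
end

section
/- Let X, X_1, X_2, … be i.i.d. random vectors in ℝ^d with a density f. If E[(ln ‖X‖)^+] = ∞, then for every n ≥ 2, E[(ln R_{n,1}(X_1))^+] = ∞, where R_{n,1}(X_1) = min_{2 ≤ j ≤ n} ‖X_1 − X_j‖. -/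
/-!
Choose `M` so large that each of `X₁, …, X_{n-1}` lies in the closed ball of radius `M`
with positive probability; by independence the event `A` that all of them do has
`P A > 0`. On `A` the triangle inequality gives `‖X₀‖ ≤ R + M` for the nearest-neighbour
distance `R`, hence `log⁺ ‖X₀‖ ≤ log⁺ R + log 2 + log⁺ M`. Since `X₀` is independent of
`A`, the integral of `log⁺ ‖X₀‖` over `A` is `P A · E[log⁺ ‖X₀‖] = ∞`, so `E[log⁺ R] = ∞`.
-/

open MeasureTheory ProbabilityTheory Filter Metric
open scoped ENNReal

noncomputable section

open Real

theorem dist_le_nnDist_add {E Ω : Type*} [PseudoMetricSpace E] {X : ℕ → Ω → E} {n i : ℕ}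
    {x c : E} {ω : Ω} {M : ℝ} (hne : ∃ j < n, j ≠ i)
    (hM : ∀ j < n, j ≠ i → dist (X j ω) c ≤ M) : dist x c ≤ nnDist X n i x ω + M := by
  obtain ⟨j₀, hj₀n, hj₀i⟩ := hne
  rw [← sub_le_iff_le_add]
  refine le_csInf ⟨_, j₀, ⟨hj₀n, hj₀i⟩, rfl⟩ ?_
  rintro _ ⟨j, ⟨hjn, hji⟩, rfl⟩
  linarith [dist_triangle x (X j ω) c, hM j hjn hji]

theorem Real.posLog_le_posLog_add_of_le {s t M : ℝ} (hs : 0 ≤ s) (h : s ≤ t + M) :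
    log⁺ s ≤ log⁺ t + (log 2 + log⁺ M) := by
  have := posLog_add (x := t) (y := M)
  have := posLog_le_posLog hs h
  linarith

theorem MeasureTheory.Measure.eventually_measure_closedBall_ne_zero {E : Type*}
    [PseudoMetricSpace E] [MeasurableSpace E] [OpensMeasurableSpace E] (μ : Measure E) [NeZero μ]
    (c : E) : ∀ᶠ r in atTop, μ (closedBall c r) ≠ 0 := by
  obtain ⟨k, hk⟩ : ∃ k : ℕ, μ (closedBall c k) ≠ 0 := by
    by_contra! h
    refine NeZero.ne μ (measure_univ_eq_zero.1 ?_)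
    rw [← iUnion_closedBall_nat c, measure_iUnion_null h]
  filter_upwards [eventually_ge_atTop (k : ℝ)] with r hr
  exact fun h => hk (measure_mono_null (closedBall_subset_closedBall hr) h)

theorem ProbabilityTheory.iIndepFun.indepFun_finset_of_notMem {ι Ω E : Type*}
    [MeasurableSpace Ω] [MeasurableSpace E] {μ : Measure Ω} {f : ι → Ω → E} (h : iIndepFun f μ)
    (hf : ∀ i, Measurable (f i)) {T : Finset ι} {i : ι} (hi : i ∉ T) :
    IndepFun (f i) (fun ω (j : T) => f j ω) μ := by
  have := (h.indepFun_finset {i} T (Finset.disjoint_singleton_left.2 hi) hf).comp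
    (measurable_pi_apply ⟨i, Finset.mem_singleton_self i⟩) measurable_id
  exact this

theorem ProbabilityTheory.IndepFun.setLIntegral_comp_preimage {Ω α β : Type*}
    [MeasurableSpace Ω] [MeasurableSpace α] [MeasurableSpace β] {μ : Measure Ω}
    {X : Ω → α} {Y : Ω → β} (h : IndepFun X Y μ) (hX : Measurable X) (hY : Measurable Y)
    {g : α → ℝ≥0∞} (hg : Measurable g) {s : Set β} (hs : MeasurableSet s) :
    ∫⁻ ω in Y ⁻¹' s, g (X ω) ∂μ = μ (Y ⁻¹' s) * ∫⁻ ω, g (X ω) ∂μ := by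
  have hind : (Y ⁻¹' s).indicator (fun ω => g (X ω)) =
      fun ω => g (X ω) * s.indicator 1 (Y ω) := by
    ext ω; by_cases hω : Y ω ∈ s <;> simp [hω]
  rw [← lintegral_indicator (hY hs), hind]
  refine (lintegral_mul_eq_lintegral_mul_lintegral_of_indepFun'' (hg.comp hX).aemeasurable
    ((measurable_one.indicator hs).comp hY).aemeasurable
    (h.comp hg (measurable_one.indicator hs))).trans ?_
  rw [mul_comm]
  congr 1
  exact lintegral_indicator_one (hY hs)

theorem ProbabilityTheory.iIndepFun.setLIntegral_biInter_preimage {ι Ω E : Type*}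
    [MeasurableSpace Ω] [MeasurableSpace E] {μ : Measure Ω} {f : ι → Ω → E} (h : iIndepFun f μ)
    (hf : ∀ i, Measurable (f i)) {T : Finset ι} {i : ι} (hi : i ∉ T) {B : ι → Set E}
    (hB : ∀ j, MeasurableSet (B j)) {g : E → ℝ≥0∞} (hg : Measurable g) :
    ∫⁻ ω in ⋂ j ∈ T, f j ⁻¹' B j, g (f i ω) ∂μ =
      μ (⋂ j ∈ T, f j ⁻¹' B j) * ∫⁻ ω, g (f i ω) ∂μ := by
  have hset : ⋂ j ∈ T, f j ⁻¹' B j = (fun ω (j : T) => f j ω) ⁻¹' Set.univ.pi fun j => B j :=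
    by ext; simp
  rw [hset]
  exact (h.indepFun_finset_of_notMem hf hi).setLIntegral_comp_preimage (hf i)
    (measurable_pi_lambda _ fun j => hf j) hg (.univ_pi fun j => hB j)

theorem MeasureTheory.lintegral_eq_top_of_setLIntegral_eq_top_of_le_add {Ω : Type*}
    [MeasurableSpace Ω] {μ : Measure Ω} [IsFiniteMeasure μ] {f g : Ω → ℝ≥0∞} {s : Set Ω}
    (hs : MeasurableSet s) {c : ℝ≥0∞} (hc : c ≠ ⊤) (hf : ∫⁻ ω in s, f ω ∂μ = ⊤)
    (hfg : ∀ ω ∈ s, f ω ≤ g ω + c) : ∫⁻ ω, g ω ∂μ = ⊤ := by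
  have : ⊤ ≤ (∫⁻ ω, g ω ∂μ) + c * μ s :=
    calc ⊤ = ∫⁻ ω in s, f ω ∂μ := hf.symm
      _ ≤ ∫⁻ ω in s, g ω + c ∂μ := setLIntegral_mono' hs hfg
      _ = (∫⁻ ω in s, g ω ∂μ) + c * μ s := by
        rw [lintegral_add_right _ measurable_const, setLIntegral_const]
      _ ≤ (∫⁻ ω, g ω ∂μ) + c * μ s := add_le_add (setLIntegral_le_lintegral s g) le_rfl
  simpa [ENNReal.mul_ne_top hc (measure_ne_top μ s)] using this

theorem log_nn_dist_pos_part_infinite_general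
    {d : ℕ}
    {Ω : Type*} [MeasurableSpace Ω] (P : Measure Ω) [IsProbabilityMeasure P]
    (X : ℕ → Ω → EuclideanSpace ℝ (Fin d))
    (hX_meas : ∀ i, Measurable (X i))
    (hX_indep : iIndepFun X P)
    (hinf : ∫⁻ ω, ENNReal.ofReal (max (Real.log ‖X 0 ω‖) 0) ∂P = ⊤) :
    ∀ n, 2 ≤ n →
      ∫⁻ ω, ENNReal.ofReal (max (Real.log (nnDist X n 0 (X 0 ω) ω)) 0) ∂P = ⊤ := by
  intro n hn
  simp only [max_comm _ (0 : ℝ), ← posLog_apply] at hinf ⊢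
  set T := Finset.Ico 1 n
  have hball : ∀ᶠ M : ℝ in atTop, ∀ j ∈ T, P (X j ⁻¹' closedBall 0 M) ≠ 0 := by
    refine (eventually_all_finset T).2 fun j _ => ?_
    have := Measure.isProbabilityMeasure_map (μ := P) (hX_meas j).aemeasurable
    simpa only [Measure.map_apply (hX_meas j) measurableSet_closedBall] using
      (P.map (X j)).eventually_measure_closedBall_ne_zero 0
  obtain ⟨M, hM⟩ := hball.exists
  set A := ⋂ j ∈ T, X j ⁻¹' closedBall 0 M
  have hA : MeasurableSet A :=
    T.measurableSet_biInter fun j _ => hX_meas j measurableSet_closedBall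
  have hA_pos : P A ≠ 0 := by
    rw [hX_indep.measure_inter_preimage_eq_mul T fun _ _ => measurableSet_closedBall]
    exact Finset.prod_ne_zero_iff.2 hM
  have hX₀_A : ∫⁻ ω in A, ENNReal.ofReal (log⁺ ‖X 0 ω‖) ∂P = ⊤ := by
    rw [hX_indep.setLIntegral_biInter_preimage hX_meas (by simp [T])
      (fun _ => measurableSet_closedBall) (g := fun x => ENNReal.ofReal (log⁺ ‖x‖)) (by fun_prop),
      hinf, ENNReal.mul_top hA_pos]
  refine lintegral_eq_top_of_setLIntegral_eq_top_of_le_add (c := .ofReal (log 2 + log⁺ M)) hA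
    ENNReal.ofReal_ne_top hX₀_A fun ω hω => ?_
  have hnorm : ‖X 0 ω‖ ≤ nnDist X n 0 (X 0 ω) ω + M := by
    simpa using dist_le_nnDist_add (X := X) (x := X 0 ω) (c := 0) (M := M)
      ⟨1, hn, one_ne_zero⟩ fun j hjn hj0 => by
        simpa using Set.mem_iInter₂.1 hω j (by simp [T]; omega)
  rw [← ENNReal.ofReal_add posLog_nonneg (add_nonneg (log_nonneg one_le_two) posLog_nonneg)]
  exact ENNReal.ofReal_le_ofReal (posLog_le_posLog_add_of_le (norm_nonneg _) hnorm)

/-- If `E[(ln ‖X‖)^+] = ∞`, then for every `n ≥ 2`, `E[(ln R_{n,1}(X_1))^+] = ∞`,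
where `R_{n,1}(X_1) = min_{2 ≤ j ≤ n} ‖X_1 − X_j‖` is the nearest-neighbor distance
of `X_1` among `X_2, …, X_n`. -/
theorem log_nn_dist_pos_part_infinite
    {d : ℕ} (hd : 1 ≤ d)
    (f : EuclideanSpace ℝ (Fin d) → ℝ)
    (hf_meas : Measurable f) (hf_nonneg : ∀ x, 0 ≤ f x)
    (hf_prob : ∫ x, f x = 1)
    {Ω : Type*} [MeasurableSpace Ω] (P : Measure Ω) [IsProbabilityMeasure P]
    (X : ℕ → Ω → EuclideanSpace ℝ (Fin d))
    (hX_meas : ∀ i, Measurable (X i))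
    (hX_indep : iIndepFun X P)
    (hX_law : ∀ i, Measure.map (X i) P = densMeasure d f)
    (hinf : ∫⁻ ω, ENNReal.ofReal (max (Real.log ‖X 0 ω‖) 0) ∂P = ⊤) :
    ∀ n, 2 ≤ n →
      ∫⁻ ω, ENNReal.ofReal (max (Real.log (nnDist X n 0 (X 0 ω) ω)) 0) ∂P = ⊤ :=
  log_nn_dist_pos_part_infinite_general P X hX_meas hX_indep hinf
end
end

section
/- Let Y_1, …, Y_n be i.i.d. random variables with values in the positive integers and P{Y_1 = j} = 1/(j(j+1)) for j ≥ 1 (n ≥ 2). Then the probability that the maximum of Y_1, …, Y_n is attained by at least two of the indices (equivalently, that the largest and the second largest order statistics are equal) tends to 0 as n → ∞. -/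
open MeasureTheory ProbabilityTheory Filter

/-!
A tie at the maximum of `Y_0, …, Y_{n-1}` either occurs at a level `≥ t`, or all values stay
below `t`. By independence and `P{Y = v} ≤ 1/t²` for `v ≥ t`, the first event has probability at
most `n² · t⁻² · P{Y ≥ t} = n²/t³`; the second has probability `(1 - 1/t)ⁿ ≤ exp (-n/t)`.
Taking `t = m³` with `m = ⌊n^{1/4}⌋` bounds the sum by `256/m + exp (-m) → 0`.
-/

open Finset in
lemma sum_range_one_div_succ_mul_succ_succ (s : ℕ) :
    ∑ v ∈ range s, 1 / ((v + 1) * (v + 2) : ℝ) = 1 - 1 / (s + 1) := by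
  have h := sum_range_sub' (fun v : ℕ => 1 / (v + 1 : ℝ)) s
  simp only [Nat.cast_zero, zero_add, div_one] at h
  rw [← h]
  refine sum_congr rfl fun v _ => ?_
  push_cast
  field_simp
  ring

section Law

variable {Ω : Type*} [MeasurableSpace Ω] {P : Measure Ω} {Z : Ω → ℕ}

lemma measure_lt_eq_of_law (hZ : Measurable Z) (hZ_pos : ∀ᵐ ω ∂P, 1 ≤ Z ω)
    (hZ_law : ∀ j : ℕ, 1 ≤ j → P {ω | Z ω = j} = ENNReal.ofReal (1 / (j * (j + 1) : ℝ)))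
    {t : ℕ} (ht : 0 < t) :
    P {ω | Z ω < t} = ENNReal.ofReal (1 - 1 / t) := by
  obtain ⟨s, rfl⟩ := Nat.exists_eq_add_one_of_ne_zero ht.ne'
  have h_zero : P (Z ⁻¹' {0}) = 0 :=
    measure_mono_null (fun ω (hω : Z ω = 0) => by simp [hω]) (ae_iff.mp hZ_pos)
  have h_succ (v : ℕ) : P (Z ⁻¹' {v + 1}) = ENNReal.ofReal (1 / ((v + 1) * (v + 2) : ℝ)) := by
    have h := hZ_law (v + 1) le_add_self
    push_cast at h
    rwa [add_assoc, one_add_one_eq_two] at h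
  have h_set : {ω | Z ω < s + 1} = Z ⁻¹' ↑(Finset.range (s + 1)) := by ext; simp
  rw [h_set, ← sum_measure_preimage_singleton _ fun v _ => hZ (measurableSet_singleton v),
    Finset.sum_range_succ', h_zero, add_zero]
  simp_rw [h_succ]
  rw [← ENNReal.ofReal_sum_of_nonneg fun v _ => by positivity,
    sum_range_one_div_succ_mul_succ_succ]
  push_cast
  rfl

lemma measure_ge_eq_of_law [IsProbabilityMeasure P] (hZ : Measurable Z)
    (hZ_pos : ∀ᵐ ω ∂P, 1 ≤ Z ω)
    (hZ_law : ∀ j : ℕ, 1 ≤ j → P {ω | Z ω = j} = ENNReal.ofReal (1 / (j * (j + 1) : ℝ)))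
    {t : ℕ} (ht : 0 < t) :
    P {ω | t ≤ Z ω} = ENNReal.ofReal (1 / t) := by
  have h_compl : {ω | t ≤ Z ω} = {ω | Z ω < t}ᶜ := by ext; simp
  rw [h_compl, prob_compl_eq_one_sub (measurableSet_lt hZ measurable_const),
    measure_lt_eq_of_law hZ hZ_pos hZ_law ht, ← ENNReal.ofReal_one,
    ← ENNReal.ofReal_sub _ (Nat.one_sub_one_div_cast_nonneg t), sub_sub_cancel]

lemma measure_eq_le_of_law
    (hZ_law : ∀ j : ℕ, 1 ≤ j → P {ω | Z ω = j} = ENNReal.ofReal (1 / (j * (j + 1) : ℝ)))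
    {t v : ℕ} (ht : 0 < t) (hv : t ≤ v) :
    P (Z ⁻¹' {v}) ≤ ENNReal.ofReal (1 / t ^ 2) := by
  refine (hZ_law v (ht.trans_le hv)).trans_le (ENNReal.ofReal_le_ofReal ?_)
  have ht' : (0 : ℝ) < t := by exact_mod_cast ht
  have hv' : (t : ℝ) ≤ v := by exact_mod_cast hv
  gcongr
  nlinarith

end Law

lemma ProbabilityTheory.IndepFun.measure_eq_and_mem_le {Ω β : Type*} [MeasurableSpace Ω]
    [MeasurableSpace β] [Countable β] [MeasurableSingletonClass β] {P : Measure Ω} {Z₁ Z₂ : Ω → β}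
    (h_indep : IndepFun Z₁ Z₂ P) (hZ₂ : Measurable Z₂) {S : Set β} {c : ENNReal}
    (hc : ∀ b ∈ S, P (Z₁ ⁻¹' {b}) ≤ c) :
    P {ω | Z₁ ω = Z₂ ω ∧ Z₂ ω ∈ S} ≤ c * P (Z₂ ⁻¹' S) := by
  have h_union : {ω | Z₁ ω = Z₂ ω ∧ Z₂ ω ∈ S} = ⋃ b ∈ S, Z₁ ⁻¹' {b} ∩ Z₂ ⁻¹' {b} := by
    ext ω
    simp only [Set.mem_iUnion, Set.mem_inter_iff, Set.mem_preimage, Set.mem_singleton_iff,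
      exists_prop]
    grind
  calc P {ω | Z₁ ω = Z₂ ω ∧ Z₂ ω ∈ S}
      ≤ ∑' b : S, P (Z₁ ⁻¹' {↑b} ∩ Z₂ ⁻¹' {↑b}) :=
        h_union ▸ measure_biUnion_le P S.to_countable _
    _ = ∑' b : S, P (Z₁ ⁻¹' {↑b}) * P (Z₂ ⁻¹' {↑b}) := by
        refine tsum_congr fun b => ?_
        exact h_indep.measure_inter_preimage_eq_mul _ _ (measurableSet_singleton _)
          (measurableSet_singleton _)
    _ ≤ ∑' b : S, c * P (Z₂ ⁻¹' {↑b}) :=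
        ENNReal.tsum_le_tsum fun b => by gcongr; exact hc b b.2
    _ = c * P (Z₂ ⁻¹' S) := by
        rw [ENNReal.tsum_mul_left, tsum_measure_preimage_singleton S.to_countable
          fun b _ => hZ₂ (measurableSet_singleton b)]

lemma ProbabilityTheory.iIndepFun.measure_forall_lt_mem_eq_prod {Ω β : Type*} [MeasurableSpace Ω]
    [MeasurableSpace β] {P : Measure Ω} {Y : ℕ → Ω → β} (h_indep : iIndepFun Y P)
    {S : Set β} (hS : MeasurableSet S) (n : ℕ) :
    P {ω | ∀ k < n, Y k ω ∈ S} = ∏ k ∈ Finset.range n, P (Y k ⁻¹' S) := by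
  rw [← h_indep.measure_inter_preimage_eq_mul _ fun _ _ => hS]
  congr 1
  ext; simp

lemma measure_tied_max_le {Ω β : Type*} [MeasurableSpace Ω] [LinearOrder β] {P : Measure Ω}
    (Y : ℕ → Ω → β) (n : ℕ) (t : β) {c : ENNReal}
    (h_pair : ∀ i j, i ≠ j → P {ω | Y i ω = Y j ω ∧ t ≤ Y j ω} ≤ c) :
    P {ω | ∃ i < n, ∃ j < n, i ≠ j ∧ Y i ω = Y j ω ∧ ∀ k < n, Y k ω ≤ Y i ω} ≤
      n ^ 2 * c + P {ω | ∀ k < n, Y k ω < t} := by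
  have h_sub : {ω | ∃ i < n, ∃ j < n, i ≠ j ∧ Y i ω = Y j ω ∧ ∀ k < n, Y k ω ≤ Y i ω} ⊆
      (⋃ p ∈ (Finset.range n).offDiag, {ω | Y p.1 ω = Y p.2 ω ∧ t ≤ Y p.2 ω}) ∪
        {ω | ∀ k < n, Y k ω < t} := by
    rintro ω ⟨i, hi, j, hj, hij, h_eq, h_max⟩
    by_cases h_big : t ≤ Y j ω
    · left
      exact Set.mem_biUnion (x := (i, j)) (Finset.mem_offDiag.mpr ⟨Finset.mem_range.mpr hi,
        Finset.mem_range.mpr hj, hij⟩) ⟨h_eq, h_big⟩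
    · exact Or.inr fun k hk => (h_max k hk).trans_lt (h_eq ▸ not_le.mp h_big)
  refine (measure_mono h_sub).trans ((measure_union_le _ _).trans (add_le_add_left ?_ _))
  calc P (⋃ p ∈ (Finset.range n).offDiag, {ω | Y p.1 ω = Y p.2 ω ∧ t ≤ Y p.2 ω})
      ≤ ∑ p ∈ (Finset.range n).offDiag, c :=
        (measure_biUnion_finset_le _ _).trans (Finset.sum_le_sum fun p hp =>
          h_pair p.1 p.2 (Finset.mem_offDiag.mp hp).2.2)
    _ ≤ n ^ 2 * c := by
        rw [Finset.sum_const, nsmul_eq_mul, Finset.offDiag_card, Finset.card_range]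
        gcongr
        exact_mod_cast (Nat.sub_le _ _).trans (sq n).ge

lemma Nat.sqrt_sqrt_pow_four_le (n : ℕ) : n.sqrt.sqrt ^ 4 ≤ n :=
  calc n.sqrt.sqrt ^ 4 = (n.sqrt.sqrt ^ 2) ^ 2 := by ring
    _ ≤ n.sqrt ^ 2 := Nat.pow_le_pow_left (Nat.sqrt_le' _) 2
    _ ≤ n := Nat.sqrt_le' n

lemma Nat.lt_sqrt_sqrt_add_one_pow_four (n : ℕ) : n < (n.sqrt.sqrt + 1) ^ 4 :=
  calc n < (n.sqrt + 1) ^ 2 := Nat.lt_succ_sqrt' n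
    _ ≤ ((n.sqrt.sqrt + 1) ^ 2) ^ 2 := Nat.pow_le_pow_left (Nat.lt_succ_sqrt' _) 2
    _ = (n.sqrt.sqrt + 1) ^ 4 := by ring

lemma sq_div_cube_add_one_sub_inv_pow_le {n m : ℕ} (hm : 0 < m) (h_low : m ^ 4 ≤ n)
    (h_up : n < (m + 1) ^ 4) :
    (n : ℝ) ^ 2 / ((m : ℝ) ^ 3) ^ 3 + (1 - 1 / (m : ℝ) ^ 3) ^ n ≤ 256 / m + Real.exp (-m) := by
  have hm' : (1 : ℝ) ≤ m := by exact_mod_cast hm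
  have h_low' : (m : ℝ) ^ 4 ≤ n := by exact_mod_cast h_low
  have h_up' : (n : ℝ) ≤ (m + 1) ^ 4 := by exact_mod_cast h_up.le
  refine add_le_add ?_ ?_
  · rw [div_le_div_iff₀ (by positivity) (by positivity)]
    calc (n : ℝ) ^ 2 * m ≤ (((m : ℝ) + 1) ^ 4) ^ 2 * m := by gcongr
      _ ≤ ((2 * (m : ℝ)) ^ 4) ^ 2 * m := by gcongr; linarith
      _ = 256 * ((m : ℝ) ^ 3) ^ 3 := by ring
  · calc (1 - 1 / (m : ℝ) ^ 3) ^ n ≤ Real.exp (-(1 / (m : ℝ) ^ 3)) ^ n :=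
          pow_le_pow_left₀ (by exact_mod_cast Nat.one_sub_one_div_cast_nonneg (m ^ 3))
            (Real.one_sub_le_exp_neg _) n
      _ = Real.exp (-(n / (m : ℝ) ^ 3)) := by rw [← Real.exp_nat_mul]; ring_nf
      _ ≤ Real.exp (-m) := by
          gcongr
          rw [le_div_iff₀ (by positivity)]
          linarith [show (m : ℝ) * m ^ 3 = m ^ 4 by ring]

lemma tendsto_zero_of_le_sq_div_cube_add_pow {f : ℕ → ENNReal}
    (hf : ∀ n t : ℕ, 0 < t → f n ≤ ENNReal.ofReal (n ^ 2 / t ^ 3 + (1 - 1 / t) ^ n)) :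
    Tendsto f atTop (nhds 0) := by
  have h_root : Tendsto (fun n : ℕ => n.sqrt.sqrt) atTop atTop :=
    tendsto_atTop_atTop.mpr fun b => ⟨b ^ 4, fun n hn =>
      Nat.le_of_lt_succ ((Nat.pow_lt_pow_iff_left (by norm_num)).mp
        (hn.trans_lt (Nat.lt_sqrt_sqrt_add_one_pow_four n)))⟩
  have h_bound : Tendsto (fun m : ℕ => 256 / (m : ℝ) + Real.exp (-m)) atTop (nhds 0) := by
    simpa using (tendsto_const_div_atTop_nhds_zero_nat 256).add
      (Real.tendsto_exp_neg_atTop_nhds_zero.comp tendsto_natCast_atTop_atTop)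
  refine tendsto_of_tendsto_of_tendsto_of_le_of_le' tendsto_const_nhds
    (by simpa using (ENNReal.tendsto_ofReal h_bound).comp h_root)
    (Eventually.of_forall fun _ => zero_le) ?_
  filter_upwards [h_root.eventually_ge_atTop 1] with n hn
  refine (hf n _ (pow_pos hn 3)).trans (ENNReal.ofReal_le_ofReal ?_)
  push_cast
  exact sq_div_cube_add_one_sub_inv_pow_le hn (Nat.sqrt_sqrt_pow_four_le n)
    (Nat.lt_sqrt_sqrt_add_one_pow_four n)

/-- Let `Y_1, …, Y_n` be i.i.d. positive-integer valued with
`P{Y = j} = 1/(j(j+1))` for `j ≥ 1`. Then the probability that the maximum of the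
sample is attained by at least two indices (i.e. the two largest order statistics
coincide) tends to `0` as `n → ∞`. -/
theorem prob_tied_maximum_tendsto_zero
    {Ω : Type*} [MeasurableSpace Ω] (P : Measure Ω) [IsProbabilityMeasure P]
    (Y : ℕ → Ω → ℕ)
    (hY_meas : ∀ i, Measurable (Y i))
    (hY_indep : iIndepFun Y P)
    (hY_pos : ∀ i, ∀ᵐ ω ∂P, 1 ≤ Y i ω)
    (hY_law : ∀ i, ∀ j : ℕ, 1 ≤ j →
      P {ω | Y i ω = j} = ENNReal.ofReal (1 / (j * (j + 1) : ℝ))) :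
    Tendsto
      (fun n =>
        P {ω | ∃ i < n, ∃ j < n, i ≠ j ∧ Y i ω = Y j ω ∧ ∀ k < n, Y k ω ≤ Y i ω})
      atTop (nhds 0) := by
  refine tendsto_zero_of_le_sq_div_cube_add_pow fun n t ht => ?_
  have h_pair (i j : ℕ) (hij : i ≠ j) : P {ω | Y i ω = Y j ω ∧ t ≤ Y j ω} ≤
      ENNReal.ofReal (1 / t ^ 2) * ENNReal.ofReal (1 / t) :=
    ((hY_indep.indepFun hij).measure_eq_and_mem_le (hY_meas j) (S := Set.Ici t)
      fun _ hv => measure_eq_le_of_law (hY_law i) ht hv).trans_eq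
      (by rw [← measure_ge_eq_of_law (hY_meas j) (hY_pos j) (hY_law j) ht]; rfl)
  have h_max : P {ω | ∀ k < n, Y k ω < t} = ENNReal.ofReal (1 - 1 / t) ^ n := by
    calc P {ω | ∀ k < n, Y k ω < t} = ∏ k ∈ Finset.range n, P (Y k ⁻¹' Set.Iio t) :=
          hY_indep.measure_forall_lt_mem_eq_prod measurableSet_Iio n
      _ = ENNReal.ofReal (1 - 1 / t) ^ n :=
          (Finset.prod_eq_pow_card fun k _ =>
            measure_lt_eq_of_law (hY_meas k) (hY_pos k) (hY_law k) ht).trans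
            (by rw [Finset.card_range])
  calc _ ≤ n ^ 2 * (ENNReal.ofReal (1 / t ^ 2) * ENNReal.ofReal (1 / t))
          + P {ω | ∀ k < n, Y k ω < t} := measure_tied_max_le Y n t h_pair
    _ = ENNReal.ofReal (n ^ 2 / t ^ 3 + (1 - 1 / t) ^ n) := by
      have h_cdf_nonneg : 0 ≤ 1 - 1 / (t : ℝ) := Nat.one_sub_one_div_cast_nonneg t
      rw [h_max, ← ENNReal.ofReal_mul (by positivity), ← ENNReal.ofReal_natCast,
        ← ENNReal.ofReal_pow (by positivity), ← ENNReal.ofReal_mul (by positivity),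
        ← ENNReal.ofReal_pow h_cdf_nonneg, ← ENNReal.ofReal_add (by positivity) (by positivity)]
      congr 2
      field_simp
end
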